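/- arXiv:1503.00914 — 2 statements merged into one kernel-verified Lean document; each statement's English description precedes it below -/
import Mathlib

section
/- For all n ≥ 1, the number of 3-ascent sequences of length n with pairwise distinct entries equals C(n+1, 2) + 2·C(n, 3) + C(n-1, 4) + C(n+2, 5). -/
/-- Number of ascents of a sequence: indices j with a_j < a_{j+1}. -/
def ascN (l : List ℕ) : ℕ := (l.zip l.tail).countP (fun q => decide (q.1 < q.2))

/-- `a` is a p-ascent sequence: nonempty, starts with 0, and each later entry
is at most `p` plus the number of ascents of the preceding prefix. -/
def IsPAsc (p : ℕ) (a : List ℕ) : Prop :=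
  a.head? = some 0 ∧ ∀ i : Fin a.length, 1 ≤ i.val → a.get i ≤ p + ascN (a.take i.val)

def Avoids01 (a : List ℕ) : Prop := ∀ i j : Fin a.length, i < j → ¬ a.get i < a.get j

def Avoids10 (a : List ℕ) : Prop := ∀ i j : Fin a.length, i < j → ¬ a.get j < a.get i

def Avoids012 (a : List ℕ) : Prop :=
  ∀ i j k : Fin a.length, i < j → j < k → ¬ (a.get i < a.get j ∧ a.get j < a.get k)

/-- primitive: no two equal consecutive letters -/
def Primitive (a : List ℕ) : Prop := a.Chain' (· ≠ ·)

/-!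
A sequence `b` with distinct entries extends to `b ++ [v]` within the `p`-ascent sequences with
distinct entries exactly when `v` is one of the allowed values `{0, …, p + asc b} \ b`. What
matters about `b` for the future is its state `(c, r)`: the number `c` of allowed values and the
number `r` of allowed values below the last entry. Appending the allowed value of rank `j` leads to
`(c, j)` when `j ≥ r` (an ascent: `v` is used up but `p + 1 + asc b` becomes allowed) and to
`(c - 1, j)` when `j < r`. From the initial state `(p, 0)` of `[0]` only states with
`r < c ≤ p` occur; for `p = 3` these are six, and the numbers of sequences of each length in each
state satisfy a triangular linear recursion whose solutions are sums of binomial coefficients.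
-/

open Finset

section Rank

variable {α : Type*} [LinearOrder α] {s : Finset α} {a b : α}

lemma card_filter_lt_mono (hab : a ≤ b) : #{u ∈ s | u < a} ≤ #{u ∈ s | u < b} :=
  card_le_card <| monotone_filter_right s fun _ _ hu => hu.trans_le hab

lemma card_filter_lt_strictMono (ha : a ∈ s) (hab : a < b) :
    #{u ∈ s | u < a} < #{u ∈ s | u < b} :=
  card_lt_card <| (ssubset_iff_of_subset (monotone_filter_right s fun _ _ hu => hu.trans hab)).2
    ⟨a, mem_filter.2 ⟨ha, hab⟩, by simp⟩

lemma card_filter_lt_lt_card (ha : a ∈ s) : #{u ∈ s | u < a} < #s :=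
  card_lt_card <| (ssubset_iff_of_subset (filter_subset _ s)).2 ⟨a, ha, by simp⟩

variable (s)

lemma strictMonoOn_card_filter_lt : StrictMonoOn (fun v => #{u ∈ s | u < v}) s :=
  fun _ ha _ _ hab => card_filter_lt_strictMono ha hab

lemma image_card_filter_lt : s.image (fun v => #{u ∈ s | u < v}) = range #s :=
  eq_of_subset_of_card_le (image_subset_iff.2 fun _ ha => mem_range.2 (card_filter_lt_lt_card ha))
    (by rw [card_range, card_image_of_injOn (strictMonoOn_card_filter_lt s).injOn])

lemma card_filter_card_filter_lt (P : ℕ → Prop) [DecidablePred P] :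
    #{v ∈ s | P #{u ∈ s | u < v}} = #{j ∈ range #s | P j} := by
  rw [← image_card_filter_lt, filter_image,
    card_image_of_injOn ((strictMonoOn_card_filter_lt s).injOn.mono (filter_subset _ s))]

end Rank

variable {p : ℕ}

lemma ascN_cons_cons (x y : ℕ) (l : List ℕ) :
    ascN (x :: y :: l) = (if x < y then 1 else 0) + ascN (y :: l) := by
  simp only [ascN, List.tail_cons, List.zip_cons_cons, List.countP_cons]
  by_cases h : x < y <;> simp [h, Nat.add_comm]

lemma ascN_append_singleton {b : List ℕ} (hb : b ≠ []) (v : ℕ) :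
    ascN (b ++ [v]) = ascN b + if b.getLastD 0 < v then 1 else 0 := by
  induction b with
  | nil => exact absurd rfl hb
  | cons x xs ih =>
    cases xs with
    | nil => simp [ascN]
    | cons y t =>
      simp only [List.cons_append, ascN_cons_cons] at ih ⊢
      rw [ih (List.cons_ne_nil _ _)]
      simp only [List.getLastD_cons]
      omega

lemma isPAsc_iff {a : List ℕ} : IsPAsc p a ↔
    a.head? = some 0 ∧ ∀ i (hi : i < a.length), 1 ≤ i → a[i] ≤ p + ascN (a.take i) :=
  and_congr_right' ⟨fun h i hi => h ⟨i, hi⟩, fun h i => h i i.isLt⟩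

lemma IsPAsc.ne_nil {a : List ℕ} (ha : IsPAsc p a) : a ≠ [] := by
  rintro rfl
  simp [IsPAsc] at ha

lemma isPAsc_append_singleton {v : ℕ} {b : List ℕ} (hb : b ≠ []) :
    IsPAsc p (b ++ [v]) ↔ IsPAsc p b ∧ v ≤ p + ascN b := by
  simp only [isPAsc_iff, List.head?_append_of_ne_nil _ hb, List.length_append,
    List.length_singleton]
  rw [and_assoc]
  refine and_congr_right fun _ => ⟨fun h => ⟨fun i hi h1 => ?_, ?_⟩, fun ⟨h, hv⟩ i hi h1 => ?_⟩
  · simpa [List.getElem_append_left hi, List.take_append_of_le_length hi.le] using h i (by omega) h1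
  · simpa using h b.length (by omega) (List.length_pos_iff.2 hb)
  · rcases Nat.lt_succ_iff_lt_or_eq.1 hi with hi | rfl
    · simpa [List.getElem_append_left hi, List.take_append_of_le_length hi.le] using h i hi h1
    · simpa using hv

def allowed (p : ℕ) (b : List ℕ) : Finset ℕ := {v ∈ range (p + 1 + ascN b) | v ∉ b}

lemma mem_allowed {b : List ℕ} {v : ℕ} : v ∈ allowed p b ↔ v ≤ p + ascN b ∧ v ∉ b := by
  simp [allowed, Nat.add_right_comm]

/-- Indexed so that `distinctAscSeqs p k` holds the sequences of length `k + 1`. -/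
def distinctAscSeqs (p : ℕ) : ℕ → Finset (List ℕ)
  | 0 => {[0]}
  | k + 1 => (distinctAscSeqs p k).biUnion fun b => (allowed p b).image (b ++ [·])

lemma mem_distinctAscSeqs {k : ℕ} {a : List ℕ} :
    a ∈ distinctAscSeqs p k ↔ a.length = k + 1 ∧ IsPAsc p a ∧ a.Nodup := by
  induction k generalizing a with
  | zero =>
    rcases a with _ | ⟨x, _ | ⟨y, l⟩⟩ <;> simp [distinctAscSeqs, IsPAsc]
  | succ k ih =>
    simp only [distinctAscSeqs, mem_biUnion, mem_image, ih, mem_allowed]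
    constructor
    · rintro ⟨b, ⟨hlen, hb, hnd⟩, v, ⟨hv, hvb⟩, rfl⟩
      exact ⟨by simp [hlen], (isPAsc_append_singleton hb.ne_nil).2 ⟨hb, hv⟩,
        List.nodup_append.2 ⟨hnd, by simp, fun x hx y hy hxy => hvb (by simp_all)⟩⟩
    · rintro ⟨hlen, ha, hnd⟩
      obtain ⟨b, v, rfl⟩ : ∃ b v, a = b ++ [v] := by
        rcases a.eq_nil_or_concat with rfl | h
        · simp at hlen
        · simpa using h
      have hb0 : b ≠ [] := List.ne_nil_of_length_pos (by simp at hlen; omega)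
      obtain ⟨hb, hv⟩ := (isPAsc_append_singleton hb0).1 ha
      exact ⟨b, ⟨by simpa using hlen, hb, hnd.sublist (by simp)⟩, v,
        ⟨hv, fun hvb => (List.nodup_append.1 hnd).2.2 v hvb v (by simp) rfl⟩, rfl⟩

lemma lt_of_mem_distinctAscSeqs {k : ℕ} {b : List ℕ} (hb : b ∈ distinctAscSeqs p k) :
    ∀ x ∈ b, x < p + 1 + ascN b := by
  induction k generalizing b with
  | zero => simp_all [distinctAscSeqs]
  | succ k ih =>
    simp only [distinctAscSeqs, mem_biUnion, mem_image] at hb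
    obtain ⟨b, hb, v, hv, rfl⟩ := hb
    have hv := (mem_allowed.1 hv).1
    rw [ascN_append_singleton (mem_distinctAscSeqs.1 hb).2.1.ne_nil]
    simp only [List.mem_append, List.mem_singleton]
    rintro x (hx | rfl)
    · have := ih hb x hx
      omega
    · omega

def lastRank (p : ℕ) (b : List ℕ) : ℕ := #{u ∈ allowed p b | u < b.getLastD 0}

def state (p : ℕ) (b : List ℕ) : ℕ × ℕ := (#(allowed p b), lastRank p b)

def step (s : ℕ × ℕ) (j : ℕ) : ℕ × ℕ := (if j < s.2 then s.1 - 1 else s.1, j)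

section Append

variable {b : List ℕ} {v : ℕ}

lemma getLastD_lt_iff (hb0 : b ≠ []) (hv : v ∈ allowed p b) :
    b.getLastD 0 < v ↔ lastRank p b ≤ #{u ∈ allowed p b | u < v} := by
  have hne : v ≠ b.getLastD 0 := fun h =>
    (mem_allowed.1 hv).2 (h ▸ by simp [List.getLast?_eq_some_getLast hb0])
  refine ⟨fun h => card_filter_lt_mono h.le, fun h => ?_⟩
  by_contra! hle
  exact (card_filter_lt_strictMono hv (lt_of_le_of_ne hle hne)).not_ge h

variable (hb0 : b ≠ []) (hbd : ∀ x ∈ b, x < p + 1 + ascN b) (hv : v ∈ allowed p b)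
include hb0 hbd hv

lemma allowed_append_singleton :
    allowed p (b ++ [v]) = if b.getLastD 0 < v
      then insert (p + 1 + ascN b) ((allowed p b).erase v) else (allowed p b).erase v := by
  obtain ⟨hvle, hvb⟩ := mem_allowed.1 hv
  ext x
  have hx : x = p + 1 + ascN b → x ∉ b := fun hx hxb => (hbd x hxb).ne hx
  split_ifs with h <;>
    simp only [mem_allowed, ascN_append_singleton hb0, h, if_true, if_false, mem_insert, mem_erase,
      List.mem_append, List.mem_singleton] <;>
    grind

lemma card_allowed_append_singleton :
    #(allowed p (b ++ [v])) = if b.getLastD 0 < v then #(allowed p b) else #(allowed p b) - 1 := by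
  have hnew : p + 1 + ascN b ∉ (allowed p b).erase v := fun h => by
    simp [mem_allowed] at h
  rw [allowed_append_singleton hb0 hbd hv]
  split_ifs
  · rw [card_insert_of_notMem hnew, card_erase_of_mem hv, Nat.sub_add_cancel (card_pos.2 ⟨v, hv⟩)]
  · rw [card_erase_of_mem hv]

lemma lastRank_append_singleton : lastRank p (b ++ [v]) = #{u ∈ allowed p b | u < v} := by
  have hvle := (mem_allowed.1 hv).1
  rw [lastRank, allowed_append_singleton hb0 hbd hv, List.getLastD_concat]
  have herase : ((allowed p b).erase v).filter (· < v) = (allowed p b).filter (· < v) :=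
    (filter_erase _ _ _).trans (erase_eq_of_notMem (by simp))
  split_ifs
  · rw [filter_insert, if_neg (by omega), herase]
  · rw [herase]

lemma state_append_singleton :
    state p (b ++ [v]) = step (state p b) #{u ∈ allowed p b | u < v} := by
  refine Prod.ext ?_ (lastRank_append_singleton hb0 hbd hv)
  change #(allowed p (b ++ [v])) =
    if #{u ∈ allowed p b | u < v} < lastRank p b then #(allowed p b) - 1 else #(allowed p b)
  have hlast := getLastD_lt_iff hb0 hv
  rw [card_allowed_append_singleton hb0 hbd hv]
  by_cases h : b.getLastD 0 < v
  · rw [if_pos h, if_neg (hlast.1 h).not_gt]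
  · rw [if_neg h, if_pos (lt_of_not_ge (mt hlast.2 h))]

end Append

lemma ne_nil_of_mem_distinctAscSeqs {k : ℕ} {b : List ℕ} (hb : b ∈ distinctAscSeqs p k) :
    b ≠ [] :=
  (mem_distinctAscSeqs.1 hb).2.1.ne_nil

lemma card_filter_distinctAscSeqs_succ (k : ℕ) (Q : List ℕ → Prop) [DecidablePred Q] :
    #{a ∈ distinctAscSeqs p (k + 1) | Q a} =
      ∑ b ∈ distinctAscSeqs p k, #{v ∈ allowed p b | Q (b ++ [v])} := by
  rw [distinctAscSeqs, filter_biUnion, card_biUnion]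
  · refine sum_congr rfl fun b _ => ?_
    rw [filter_image, card_image_of_injective _ fun _ _ h => by simpa using h]
  · intro b _ b' _ hbb'
    refine disjoint_left.2 fun a ha ha' => hbb' ?_
    simp only [mem_filter, mem_image] at ha ha'
    obtain ⟨⟨v, _, rfl⟩, _⟩ := ha
    obtain ⟨⟨v', _, h⟩, _⟩ := ha'
    exact (List.append_inj' h rfl).1.symm

def stateCount (p k : ℕ) (s : ℕ × ℕ) : ℕ := #{b ∈ distinctAscSeqs p k | state p b = s}

lemma stateCount_succ {k : ℕ} {T : Finset (ℕ × ℕ)}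
    (hT : ∀ b ∈ distinctAscSeqs p k, state p b ∈ T) (s' : ℕ × ℕ) :
    stateCount p (k + 1) s' = ∑ s ∈ T, stateCount p k s * #{j ∈ range s.1 | step s j = s'} := by
  rw [stateCount, card_filter_distinctAscSeqs_succ, ← sum_fiberwise_of_maps_to hT]
  refine sum_congr rfl fun s _ => ?_
  rw [stateCount, card_eq_sum_ones, sum_mul, one_mul]
  refine sum_congr rfl fun b hbs => ?_
  obtain ⟨hb, rfl⟩ := mem_filter.1 hbs
  change _ = #{j ∈ range #(allowed p b) | step (state p b) j = s'}
  rw [← card_filter_card_filter_lt]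
  refine congr_arg card (filter_congr fun v hv => ?_)
  rw [state_append_singleton (ne_nil_of_mem_distinctAscSeqs hb) (lt_of_mem_distinctAscSeqs hb) hv]

lemma card_filter_step (s s' : ℕ × ℕ) :
    #{j ∈ range s.1 | step s j = s'} = if s'.2 < s.1 ∧ step s s'.2 = s' then 1 else 0 := by
  have hj : ∀ j, step s j = s' → j = s'.2 := fun j h => by rw [← h]; rfl
  split_ifs with h
  · rw [card_eq_one]
    exact ⟨s'.2, by ext j; simp only [mem_filter, mem_range, mem_singleton]; grind⟩
  · rw [card_eq_zero, filter_eq_empty_iff]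
    intro j hj' hjs
    obtain rfl := hj j hjs
    exact h ⟨mem_range.1 hj', hjs⟩

def states (p : ℕ) : Finset (ℕ × ℕ) := {s ∈ range (p + 1) ×ˢ range p | s.2 < s.1}

lemma step_mem_states {s : ℕ × ℕ} {j : ℕ} (hs : s ∈ states p) (hj : j < s.1) :
    step s j ∈ states p := by
  simp only [states, step, mem_filter, mem_product, mem_range] at hs ⊢
  split_ifs <;> omega

lemma state_singleton_zero : state p [0] = (p, 0) := by
  have : allowed p [0] = (range (p + 1)).erase 0 := by
    ext; simp [allowed, ascN, and_comm]
  simp [state, lastRank, this]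

lemma state_mem_states (hp : 0 < p) {k : ℕ} {b : List ℕ} (hb : b ∈ distinctAscSeqs p k) :
    state p b ∈ states p := by
  induction k generalizing b with
  | zero =>
    obtain rfl := mem_singleton.1 hb
    rw [state_singleton_zero]
    simp [states, hp]
  | succ k ih =>
    simp only [distinctAscSeqs, mem_biUnion, mem_image] at hb
    obtain ⟨b, hb, v, hv, rfl⟩ := hb
    rw [state_append_singleton (ne_nil_of_mem_distinctAscSeqs hb) (lt_of_mem_distinctAscSeqs hb)
      hv]
    exact step_mem_states (ih hb) (card_filter_lt_lt_card hv)

lemma states_three : states 3 = {(3, 0), (3, 1), (3, 2), (2, 0), (2, 1), (1, 0)} := by decide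

lemma stateCount_zero (s : ℕ × ℕ) : stateCount p 0 s = if (p, 0) = s then 1 else 0 := by
  simp only [stateCount, distinctAscSeqs, filter_singleton, state_singleton_zero]
  split_ifs <;> rfl

lemma card_distinctAscSeqs_eq_sum_stateCount (hp : 0 < p) (k : ℕ) :
    #(distinctAscSeqs p k) = ∑ s ∈ states p, stateCount p k s :=
  card_eq_sum_card_fiberwise fun _ => state_mem_states hp

lemma sum_states_three (f : ℕ × ℕ → ℕ) :
    ∑ s ∈ states 3, f s = f (3, 0) + f (3, 1) + f (3, 2) + f (2, 0) + f (2, 1) + f (1, 0) := by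
  simp [states_three, add_assoc]

lemma stateCount_three_succ (k : ℕ) :
    stateCount 3 (k + 1) (3, 0) = stateCount 3 k (3, 0) ∧
    stateCount 3 (k + 1) (3, 1) = stateCount 3 k (3, 0) + stateCount 3 k (3, 1) ∧
    stateCount 3 (k + 1) (3, 2) =
      stateCount 3 k (3, 0) + stateCount 3 k (3, 1) + stateCount 3 k (3, 2) ∧
    stateCount 3 (k + 1) (2, 0) =
      stateCount 3 k (3, 1) + stateCount 3 k (3, 2) + stateCount 3 k (2, 0) ∧
    stateCount 3 (k + 1) (2, 1) =
      stateCount 3 k (3, 2) + stateCount 3 k (2, 0) + stateCount 3 k (2, 1) ∧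
    stateCount 3 (k + 1) (1, 0) = stateCount 3 k (2, 1) + stateCount 3 k (1, 0) := by
  simp only [stateCount_succ (fun _ => state_mem_states (p := 3) (by norm_num)), sum_states_three,
    card_filter_step]
  simp [step, add_assoc]

lemma stateCount_three (k : ℕ) :
    stateCount 3 k (3, 0) = 1 ∧ stateCount 3 k (3, 1) = k ∧
    stateCount 3 k (3, 2) = (k + 1).choose 2 ∧
    stateCount 3 k (2, 0) = k.choose 2 + (k + 1).choose 3 ∧
    stateCount 3 k (2, 1) = (k + 1).choose 3 + k.choose 3 + (k + 1).choose 4 ∧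
    stateCount 3 k (1, 0) = (k + 1).choose 4 + k.choose 4 + (k + 1).choose 5 := by
  induction k with
  | zero => simp [stateCount_zero, Nat.choose_eq_zero_of_lt]
  | succ k ih =>
    obtain ⟨h30, h31, h32, h20, h21, h10⟩ := ih
    obtain ⟨e30, e31, e32, e20, e21, e10⟩ := stateCount_three_succ k
    have : (k + 1 + 1).choose 2 = k + 1 + (k + 1).choose 2 := by
      rw [Nat.choose_succ_succ', Nat.choose_one_right]
    have : (k + 1 + 1).choose 3 = (k + 1).choose 2 + (k + 1).choose 3 := Nat.choose_succ_succ' _ _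
    have : (k + 1 + 1).choose 4 = (k + 1).choose 3 + (k + 1).choose 4 := Nat.choose_succ_succ' _ _
    have : (k + 1 + 1).choose 5 = (k + 1).choose 4 + (k + 1).choose 5 := Nat.choose_succ_succ' _ _
    have : (k + 1).choose 2 = k + k.choose 2 := by rw [Nat.choose_succ_succ', Nat.choose_one_right]
    have : (k + 1).choose 3 = k.choose 2 + k.choose 3 := Nat.choose_succ_succ' _ _
    have : (k + 1).choose 4 = k.choose 3 + k.choose 4 := Nat.choose_succ_succ' _ _
    omega

lemma card_distinctAscSeqs_three (k : ℕ) :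
    #(distinctAscSeqs 3 k) =
      (k + 2).choose 2 + 2 * (k + 1).choose 3 + k.choose 4 + (k + 3).choose 5 := by
  obtain ⟨h30, h31, h32, h20, h21, h10⟩ := stateCount_three k
  rw [card_distinctAscSeqs_eq_sum_stateCount (by norm_num), sum_states_three,
    h30, h31, h32, h20, h21, h10]
  have : (k + 2).choose 2 = k + 1 + (k + 1).choose 2 := by
    rw [Nat.choose_succ_succ', Nat.choose_one_right]
  have : (k + 3).choose 5 = (k + 2).choose 4 + (k + 2).choose 5 := Nat.choose_succ_succ' _ _
  have : (k + 2).choose 4 = (k + 1).choose 3 + (k + 1).choose 4 := Nat.choose_succ_succ' _ _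
  have : (k + 2).choose 5 = (k + 1).choose 4 + (k + 1).choose 5 := Nat.choose_succ_succ' _ _
  have : (k + 1).choose 3 = k.choose 2 + k.choose 3 := Nat.choose_succ_succ' _ _
  omega

theorem stmt7_general (n : ℕ) :
    Set.ncard {a : List ℕ | a.length = n ∧ IsPAsc 3 a ∧ a.Nodup} =
      (n + 1).choose 2 + 2 * n.choose 3 + (n - 1).choose 4 + (n + 2).choose 5 := by
  cases n with
  | zero =>
    have : {a : List ℕ | a.length = 0 ∧ IsPAsc 3 a ∧ a.Nodup} = ∅ :=
      Set.eq_empty_of_forall_notMem fun a h => h.2.1.ne_nil (List.length_eq_zero_iff.1 h.1)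
    rw [this, Set.ncard_empty]
    rfl
  | succ k =>
    have : {a : List ℕ | a.length = k + 1 ∧ IsPAsc 3 a ∧ a.Nodup} = distinctAscSeqs 3 k :=
      Set.ext fun _ => mem_distinctAscSeqs.symm
    rw [this, Set.ncard_coe_finset, card_distinctAscSeqs_three, Nat.add_sub_cancel]

theorem stmt7 (n : ℕ) (hn : 1 ≤ n) :
    Set.ncard {a : List ℕ | a.length = n ∧ IsPAsc 3 a ∧ a.Nodup} =
      (n + 1).choose 2 + 2 * n.choose 3 + (n - 1).choose 4 + (n + 2).choose 5 :=
  stmt7_general n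
end

section
/- For all p ≥ 2 and n ≥ 1, the number a(n,p) of p-ascent sequences of length n avoiding the pattern 012 satisfies the recursion a(n,p) = a(n,p-1) + Σ_{k=2}^{n} a(k-1, p-1)·2^(n-k). -/
/-!
A 012-avoiding sequence that starts with 0 has no ascent between two positive entries, so each
positive entry dominates everything after it. The first positive entry follows a run of zeros,
where no ascent has occurred yet, so the p-ascent condition caps it, and hence every entry, by
`p`. Thus these sequences are `0 :: t` with `t` a list whose positive entries weakly decrease
from at most `p`. Splitting on the head, the number `c q m` of such lists of length `m` with
bound `q` satisfies `c q (m + 1) = c q m + ∑ v ∈ [1, q], c v m`, and induction on `m` turns this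
into the stated recursion in `p`.
-/

/-- The positive entries form a weakly decreasing sequence bounded by `q`; zeros are placed
freely. -/
def PosAntitone (q : ℕ) (a : List ℕ) : Prop :=
  (∀ x ∈ a, x ≤ q) ∧ a.Pairwise (fun x y => 0 < x → y ≤ x)

lemma ascN_eq_zero_of_forall_eq_zero {l : List ℕ} (h : ∀ x ∈ l, x = 0) : ascN l = 0 := by
  rw [ascN, List.countP_eq_zero]
  rintro ⟨x, y⟩ hxy
  have hmem := List.of_mem_zip hxy
  simp [h x hmem.1, h y (List.mem_of_mem_tail hmem.2)]

lemma posAntitone_nil (q : ℕ) : PosAntitone q [] := by simp [PosAntitone]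

lemma posAntitone_cons_zero (q : ℕ) (t : List ℕ) : PosAntitone q (0 :: t) ↔ PosAntitone q t := by
  simp [PosAntitone]

lemma posAntitone_cons_of_pos {v : ℕ} (q : ℕ) (t : List ℕ) (hv : 0 < v) :
    PosAntitone q (v :: t) ↔ v ≤ q ∧ PosAntitone v t := by
  simp only [PosAntitone, List.mem_cons, forall_eq_or_imp, List.pairwise_cons, hv, true_imp_iff]
  constructor
  · rintro ⟨⟨hvq, -⟩, hle, ht⟩
    exact ⟨hvq, hle, ht⟩
  · rintro ⟨hvq, hle, ht⟩
    exact ⟨⟨hvq, fun x hx => (hle x hx).trans hvq⟩, hle, ht⟩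

lemma pairwise_of_avoids012 {a : List ℕ} (h0 : a.head? = some 0) (h : Avoids012 a) :
    a.Pairwise (fun x y => 0 < x → y ≤ x) := by
  obtain ⟨t, rfl⟩ : ∃ t, a = 0 :: t := by
    cases a <;> simp_all
  rw [List.pairwise_iff_get]
  intro i j hij hi
  by_contra! hlt
  have h0i : (⟨0, by simp⟩ : Fin (0 :: t).length) < i := by
    refine Fin.pos_iff_ne_zero.2 fun hi0 => ?_
    simp [hi0] at hi
  exact h _ i j h0i hij ⟨hi, hlt⟩

lemma le_of_isPAsc_of_pairwise {q : ℕ} {a : List ℕ} (ha : IsPAsc q a)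
    (hpw : a.Pairwise (fun x y => 0 < x → y ≤ x)) : ∀ x ∈ a, x ≤ q := by
  obtain ⟨h0, hbound⟩ := ha
  suffices key : ∀ m (hm : m < a.length), a[m] ≤ q by
    intro x hx
    obtain ⟨m, hm, rfl⟩ := List.mem_iff_getElem.1 hx
    exact key m hm
  intro m
  induction m using Nat.strong_induction_on with
  | _ m ih =>
  intro hm
  by_cases hprev : ∃ j, ∃ hj : j < m, a[j]'(hj.trans hm) ≠ 0
  · obtain ⟨j, hj, hpos⟩ := hprev
    exact (List.pairwise_iff_getElem.1 hpw j m _ hm hj (Nat.pos_of_ne_zero hpos)).trans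
      (ih j hj _)
  push Not at hprev
  rcases Nat.eq_zero_or_pos m with rfl | hm1
  · cases a <;> simp_all
  have hasc : ascN (a.take m) = 0 := by
    refine ascN_eq_zero_of_forall_eq_zero fun x hx => ?_
    obtain ⟨j, hj, rfl⟩ := List.mem_iff_getElem.1 hx
    rw [List.length_take] at hj
    rw [List.getElem_take]
    exact hprev j (by omega)
  simpa [hasc] using hbound ⟨m, hm⟩ hm1

lemma isPAsc_and_avoids012_iff (q : ℕ) (a : List ℕ) :
    IsPAsc q a ∧ Avoids012 a ↔ a.head? = some 0 ∧ PosAntitone q a := by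
  constructor
  · rintro ⟨ha, hav⟩
    have hpw := pairwise_of_avoids012 ha.1 hav
    exact ⟨ha.1, le_of_isPAsc_of_pairwise ha hpw, hpw⟩
  · rintro ⟨h0, hle, hpw⟩
    refine ⟨⟨h0, fun i _ => (hle _ (List.get_mem a i)).trans (Nat.le_add_right q _)⟩, ?_⟩
    rintro i j k - hjk ⟨hij, hjk'⟩
    have := List.pairwise_iff_get.1 hpw j k hjk (Nat.zero_lt_of_lt hij)
    omega

def posAntitoneLists : ℕ → ℕ → Finset (List ℕ)
  | _, 0 => {[]}
  | q, m + 1 => (posAntitoneLists q m).image (List.cons 0) ∪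
      (Finset.Icc 1 q).biUnion fun v => (posAntitoneLists v m).image (List.cons v)

lemma mem_posAntitoneLists (m q : ℕ) (a : List ℕ) :
    a ∈ posAntitoneLists q m ↔ a.length = m ∧ PosAntitone q a := by
  induction m generalizing q a with
  | zero =>
    simp only [posAntitoneLists, Finset.mem_singleton, List.length_eq_zero_iff]
    exact ⟨fun h => ⟨h, h ▸ posAntitone_nil q⟩, And.left⟩
  | succ m ih =>
    cases a with
    | nil => simp [posAntitoneLists]
    | cons v t =>
      simp only [posAntitoneLists, Finset.mem_union, Finset.mem_image, Finset.mem_biUnion,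
        Finset.mem_Icc, List.cons.injEq, List.length_cons, Nat.add_right_cancel_iff, ih]
      rcases Nat.eq_zero_or_pos v with rfl | hv
      · simp [posAntitone_cons_zero]
      · simp only [posAntitone_cons_of_pos q t hv, hv.ne, false_and, and_false, exists_false,
          false_or]
        constructor
        · rintro ⟨w, hw, t', ⟨hlen, ht'⟩, rfl, rfl⟩
          exact ⟨hlen, hw.2, ht'⟩
        · rintro ⟨hlen, hvq, ht⟩
          exact ⟨v, ⟨hv, hvq⟩, t, ⟨hlen, ht⟩, rfl, rfl⟩

lemma disjoint_image_cons {v w : ℕ} (hvw : v ≠ w) (s t : Finset (List ℕ)) :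
    Disjoint (s.image (List.cons v)) (t.image (List.cons w)) := by
  simp only [Finset.disjoint_left, Finset.mem_image]
  rintro _ ⟨_, -, rfl⟩ ⟨_, -, h⟩
  exact hvw (List.cons.inj h).1.symm

lemma card_posAntitoneLists_succ (q m : ℕ) :
    (posAntitoneLists q (m + 1)).card =
      (posAntitoneLists q m).card + ∑ v ∈ Finset.Icc 1 q, (posAntitoneLists v m).card := by
  have hdisj : Disjoint ((posAntitoneLists q m).image (List.cons 0))
      ((Finset.Icc 1 q).biUnion fun v => (posAntitoneLists v m).image (List.cons v)) := by
    refine (Finset.disjoint_biUnion_right _ _ _).2 fun v hv => disjoint_image_cons ?_ _ _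
    exact Nat.ne_of_lt (Finset.mem_Icc.1 hv).1
  rw [posAntitoneLists, Finset.card_union_of_disjoint hdisj,
    Finset.card_image_of_injective _ List.cons_injective,
    Finset.card_biUnion fun v _ w _ hvw => disjoint_image_cons hvw _ _]
  simp only [Finset.card_image_of_injective _ List.cons_injective]

/-- Combinatorially: a list that uses `p + 1` splits at its last `p + 1` into a word over
`{0, p + 1}` of length `m - 1 - j` and a list of length `j` bounded by `p`. -/
lemma card_posAntitoneLists_succ_bound (p m : ℕ) :
    (posAntitoneLists (p + 1) m).card = (posAntitoneLists p m).card +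
      ∑ j ∈ Finset.range m, (posAntitoneLists p j).card * 2 ^ (m - 1 - j) := by
  induction m with
  | zero => simp [posAntitoneLists]
  | succ m ih =>
    rw [card_posAntitoneLists_succ, card_posAntitoneLists_succ,
      Finset.sum_Icc_succ_top (by omega), ih, Finset.sum_range_succ]
    have hdouble : ∑ j ∈ Finset.range m, (posAntitoneLists p j).card * 2 ^ (m + 1 - 1 - j) =
        2 * ∑ j ∈ Finset.range m, (posAntitoneLists p j).card * 2 ^ (m - 1 - j) := by
      rw [Finset.mul_sum]
      refine Finset.sum_congr rfl fun j hj => ?_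
      rw [show m + 1 - 1 - j = m - 1 - j + 1 by have := Finset.mem_range.1 hj; omega, pow_succ]
      ring
    rw [hdouble, show m + 1 - 1 - m = 0 by omega, pow_zero, mul_one]
    ring

lemma ncard_isPAsc_avoids012 (q : ℕ) {n : ℕ} (hn : 1 ≤ n) :
    Set.ncard {a : List ℕ | a.length = n ∧ IsPAsc q a ∧ Avoids012 a} =
      (posAntitoneLists q (n - 1)).card := by
  have hset : {a : List ℕ | a.length = n ∧ IsPAsc q a ∧ Avoids012 a} =
      ((posAntitoneLists q (n - 1)).image (List.cons 0) : Set (List ℕ)) := by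
    ext a
    simp only [Set.mem_ofPred_eq, isPAsc_and_avoids012_iff, Finset.coe_image, Set.mem_image,
      Finset.mem_coe, mem_posAntitoneLists]
    constructor
    · rintro ⟨hlen, h0, ha⟩
      obtain ⟨t, rfl⟩ : ∃ t, a = 0 :: t := by cases a <;> simp_all
      exact ⟨t, ⟨by simp at hlen; omega, (posAntitone_cons_zero q t).1 ha⟩, rfl⟩
    · rintro ⟨t, ⟨hlen, ht⟩, rfl⟩
      exact ⟨by simp; omega, rfl, (posAntitone_cons_zero q t).2 ht⟩
  rw [hset, Set.ncard_coe_finset, Finset.card_image_of_injective _ List.cons_injective]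

theorem stmt14 (n p : ℕ) (hp : 2 ≤ p) (hn : 1 ≤ n) :
    Set.ncard {a : List ℕ | a.length = n ∧ IsPAsc p a ∧ Avoids012 a} =
      Set.ncard {a : List ℕ | a.length = n ∧ IsPAsc (p - 1) a ∧ Avoids012 a} +
        ∑ k ∈ Finset.Icc 2 n,
          Set.ncard {a : List ℕ | a.length = k - 1 ∧ IsPAsc (p - 1) a ∧ Avoids012 a} *
            2 ^ (n - k) := by
  obtain ⟨q, rfl⟩ : ∃ q, p = q + 1 := ⟨p - 1, by omega⟩
  rw [ncard_isPAsc_avoids012 _ hn, ncard_isPAsc_avoids012 _ hn, Nat.add_sub_cancel,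
    card_posAntitoneLists_succ_bound, ← Finset.Ico_add_one_right_eq_Icc,
    Finset.sum_Ico_eq_sum_range, show n + 1 - 2 = n - 1 by omega]
  congr 1
  refine Finset.sum_congr rfl fun j _ => ?_
  rw [ncard_isPAsc_avoids012 _ (by omega), show 2 + j - 1 - 1 = j by omega,
    show n - (2 + j) = n - 1 - 1 - j by omega]
end
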